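/- Fix n ≥ 1, p ∈ [0,1], and υ_0, …, υ_{n−1} ∈ (0,1). Then for every (x_0, y_1, …, y_n) ∈ ℕ^{n+1} with x_0 ≥ 1, the family of nonnegative summands (x_1,…,x_n) ↦ Π_{i=1}^{n} C(x_i, y_i) p^{y_i} q^{x_i − y_i} C(x_i − 1, x_{i−1} − 1) υ_{i−1}^{x_{i−1}} (1 − υ_{i−1})^{x_i − x_{i−1}} is summable over (ℕ∖{0})^n, and its sum L(x_0, y_1, …, y_n) satisfies 0 ≤ L(x_0, y_1, …, y_n) ≤ 1. -/
import Mathlib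


open scoped BigOperators

noncomputable section

/-- Binomial coefficient `C(m,k)` for integers, with the convention that it is `0`
when `k < 0` or `k > m`. -/
def ichoose (m k : ℤ) : ℝ := if 0 ≤ k ∧ k ≤ m then ((m.toNat).choose k.toNat : ℝ) else 0

/-- The previous population size: `prevx x0 xs i` is `x0` if `i = 0` and `xs (i-1)` otherwise. -/
def prevx (x0 : ℕ) (xs : ℕ → ℕ) (i : ℕ) : ℕ := if i = 0 then x0 else xs (i - 1)

/-- Extension of a tuple `f : Fin n → ℕ` to all of `ℕ`, with default value `d` beyond `n`. -/
def extFin (n : ℕ) (f : Fin n → ℕ) (d : ℕ) : ℕ → ℕ := fun i => if h : i < n then f ⟨i, h⟩ else d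

/-- Extension of a positive tuple of population sizes to all of `ℕ`. -/
def xbar (n : ℕ) (x : Fin n → ℕ+) : ℕ → ℕ := extFin n (fun j => (x j : ℕ)) 1

/-- The summand of the POPBP likelihood: for hidden trajectory `xs = (x_1, …, x_n)`
(indexed here by `i ∈ {0, …, n-1}`, so `xs i = x_{i+1}`), data `y = (y_1, …, y_n)`
(again `y i = y_{i+1}`), initial population `x0`, detection probability `p` and
transition parameters `υ = (υ_0, …, υ_{n-1})`, this is
`∏_{i=1}^{n} C(x_i, y_i) p^{y_i} q^{x_i - y_i} C(x_i - 1, x_{i-1} - 1) υ_{i-1}^{x_{i-1}} (1-υ_{i-1})^{x_i - x_{i-1}}`. -/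
def popbpTerm (n : ℕ) (p : ℝ) (υ : ℕ → ℝ) (x0 : ℕ) (y : ℕ → ℕ) (xs : ℕ → ℕ) : ℝ :=
  ∏ i ∈ Finset.range n,
    (ichoose (xs i) (y i) * p ^ (y i) * (1 - p) ^ (xs i - y i) *
      ichoose ((xs i : ℤ) - 1) ((prevx x0 xs i : ℤ) - 1) *
      υ i ^ (prevx x0 xs i) * (1 - υ i) ^ (xs i - prevx x0 xs i))

/-- The POPBP likelihood `L(x_0, y_1, …, y_n)`: the sum over hidden trajectories
`(x_1, …, x_n) ∈ (ℕ∖{0})^n` of `popbpTerm`. -/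
def popbpL (n : ℕ) (p : ℝ) (υ : ℕ → ℝ) (x0 : ℕ) (y : Fin n → ℕ) : ℝ :=
  ∑' x : Fin n → ℕ+, popbpTerm n p υ x0 (extFin n y 0) (xbar n x)

/- ### Auxiliary lemmas -/

open scoped ENNReal

lemma ichoose_nonneg (m k : ℤ) : 0 ≤ ichoose m k := by
  unfold ichoose; split <;> positivity

lemma binomA_le_one {p : ℝ} (hp0 : 0 ≤ p) (hp1 : p ≤ 1) (b Y : ℕ) :
    ichoose b Y * p ^ Y * (1 - p) ^ (b - Y) ≤ 1 := by
  by_cases hYb : Y ≤ b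
  · have hich : ichoose b Y = (b.choose Y : ℝ) := by
      unfold ichoose
      rw [if_pos ⟨Int.ofNat_nonneg Y, by exact_mod_cast hYb⟩]
      simp
    rw [hich]
    have hq : (0:ℝ) ≤ 1 - p := by linarith
    have key : (p + (1 - p)) ^ b = ∑ k ∈ Finset.range (b + 1),
        p ^ k * (1 - p) ^ (b - k) * (b.choose k : ℝ) := add_pow p (1-p) b
    have h1 : (1:ℝ) = ∑ k ∈ Finset.range (b + 1),
        p ^ k * (1 - p) ^ (b - k) * (b.choose k : ℝ) := by
      rw [← key]; norm_num
    have hmem : Y ∈ Finset.range (b + 1) := Finset.mem_range.2 (by omega)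
    have := Finset.single_le_sum (f := fun k => p ^ k * (1 - p) ^ (b - k) * (b.choose k : ℝ))
      (fun k _ => by positivity) hmem
    calc (b.choose Y : ℝ) * p ^ Y * (1 - p) ^ (b - Y)
        = p ^ Y * (1 - p) ^ (b - Y) * (b.choose Y : ℝ) := by ring
      _ ≤ ∑ k ∈ Finset.range (b + 1), p ^ k * (1 - p) ^ (b - k) * (b.choose k : ℝ) := this
      _ = 1 := h1.symm
  · have : ichoose b Y = 0 := by
      unfold ichoose
      rw [if_neg]; rintro ⟨-, h2⟩; exact hYb (by exact_mod_cast h2)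
    rw [this]; norm_num

lemma negbin_hasSum {υ : ℝ} (hυ : υ ∈ Set.Ioo (0:ℝ) 1) (a : ℕ) (ha : 1 ≤ a) :
    HasSum (fun b : ℕ+ => ichoose (((b:ℕ):ℤ) - 1) (((a:ℕ):ℤ) - 1) * υ ^ a *
      (1 - υ) ^ ((b:ℕ) - a)) 1 := by
  obtain ⟨hυ0, hυ1⟩ := hυ
  set r : ℝ := 1 - υ with hr
  have hrn : ‖r‖ < 1 := by rw [Real.norm_eq_abs]; rw [abs_lt]; constructor <;> [linarith; linarith]
  have h0 : HasSum (fun m : ℕ => ((m + (a-1)).choose (a-1) : ℝ) * r ^ m)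
      (1 / (1 - r) ^ ((a-1) + 1)) := hasSum_choose_mul_geometric_of_norm_lt_one (a-1) hrn
  have h1 : HasSum (fun m : ℕ => υ ^ a * (((m + (a-1)).choose (a-1) : ℝ) * r ^ m))
      (υ ^ a * (1 / (1 - r) ^ ((a-1) + 1))) := h0.mul_left _
  have hsv : υ ^ a * (1 / (1 - r) ^ ((a-1) + 1)) = 1 := by
    have h1r : 1 - r = υ := by rw [hr]; ring
    rw [h1r, show (a-1) + 1 = a by omega]
    field_simp
  rw [hsv] at h1
  have hapos : ∀ m : ℕ, 0 < a + m := fun m => by omega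
  set g : ℕ → ℕ+ := fun m => ⟨a + m, hapos m⟩ with hg
  have hginj : Function.Injective g := by
    intro m₁ m₂ h
    have : a + m₁ = a + m₂ := congrArg (fun z : ℕ+ => (z : ℕ)) h
    omega
  have hrange : ∀ b : ℕ+, b ∉ Set.range g → (fun b : ℕ+ => ichoose (((b:ℕ):ℤ) - 1)
      (((a:ℕ):ℤ) - 1) * υ ^ a * (1 - υ) ^ ((b:ℕ) - a)) b = 0 := by
    intro b hb
    have hba : (b:ℕ) < a := by
      by_contra hge
      push_neg at hge
      exact hb ⟨(b:ℕ) - a, by apply PNat.coe_injective; simp [hg]; omega⟩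
    have : ichoose (((b:ℕ):ℤ) - 1) (((a:ℕ):ℤ) - 1) = 0 := by
      unfold ichoose
      rw [if_neg]
      rintro ⟨-, h2⟩
      have : (a:ℤ) ≤ (b:ℕ) := by omega
      exact absurd (by exact_mod_cast this) (by omega)
    dsimp only
    rw [this]; ring
  rw [← hginj.hasSum_iff hrange]
  convert h1 using 2 with m
  have hb : ((g m : ℕ) : ℤ) = (a : ℤ) + m := by simp [hg]
  have hich : ichoose (((g m : ℕ):ℤ) - 1) (((a:ℕ):ℤ) - 1)
      = (((m + (a-1)).choose (a-1) : ℕ) : ℝ) := by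
    unfold ichoose
    rw [if_pos ⟨by omega, by rw [hb]; omega⟩]
    congr 1
    have h1' : ((a:ℤ) - 1).toNat = a - 1 := by omega
    have h2' : (((g m : ℕ):ℤ) - 1).toNat = m + (a - 1) := by rw [hb]; omega
    rw [h1', h2']
  have hexp : (g m : ℕ) - a = m := by simp [hg]
  simp only [Function.comp]
  rw [hich, hexp]
  ring

lemma negbin_nonneg {υ : ℝ} (hυ0 : 0 < υ) (hυ1 : υ < 1) (a b : ℕ) :
    0 ≤ ichoose (((b:ℕ):ℤ) - 1) (((a:ℕ):ℤ) - 1) * υ ^ a * (1 - υ) ^ (b - a) := by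
  have h1 := ichoose_nonneg (((b:ℕ):ℤ) - 1) (((a:ℕ):ℤ) - 1)
  have h2 : (0:ℝ) ≤ 1 - υ := by linarith
  positivity

/-- The single-step factor of the POPBP summand. -/
def popbpFac (p υ : ℝ) (Y a b : ℕ) : ℝ :=
  ichoose b Y * p ^ Y * (1 - p) ^ (b - Y) *
    ichoose ((b : ℤ) - 1) ((a : ℤ) - 1) * υ ^ a * (1 - υ) ^ (b - a)

lemma popbpFac_nonneg {p υ : ℝ} (hp0 : 0 ≤ p) (hp1 : p ≤ 1) (hυ0 : 0 < υ) (hυ1 : υ < 1)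
    (Y a b : ℕ) : 0 ≤ popbpFac p υ Y a b := by
  unfold popbpFac
  have h1 := ichoose_nonneg (b : ℤ) (Y : ℤ)
  have h2 := ichoose_nonneg ((b : ℤ) - 1) ((a : ℤ) - 1)
  have h3 : (0:ℝ) ≤ 1 - p := by linarith
  have h4 : (0:ℝ) ≤ 1 - υ := by linarith
  positivity

lemma factor_tsum_le {p υ : ℝ} (hp : p ∈ Set.Icc (0:ℝ) 1) (hυ : υ ∈ Set.Ioo (0:ℝ) 1)
    (Y a : ℕ) (ha : 1 ≤ a) :
    ∑' b : ℕ+, ENNReal.ofReal (popbpFac p υ Y a (b : ℕ)) ≤ 1 := by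
  obtain ⟨hp0, hp1⟩ := hp
  have hsum := negbin_hasSum hυ a ha
  have hB : ∀ b : ℕ+, 0 ≤ ichoose (((b:ℕ):ℤ) - 1) (((a:ℕ):ℤ) - 1) * υ ^ a *
      (1 - υ) ^ ((b:ℕ) - a) := fun b => negbin_nonneg hυ.1 hυ.2 a b
  calc ∑' b : ℕ+, ENNReal.ofReal (popbpFac p υ Y a (b : ℕ))
      ≤ ∑' b : ℕ+, ENNReal.ofReal (ichoose (((b:ℕ):ℤ) - 1) (((a:ℕ):ℤ) - 1) * υ ^ a *
          (1 - υ) ^ ((b:ℕ) - a)) := by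
        apply ENNReal.tsum_le_tsum
        intro b
        apply ENNReal.ofReal_le_ofReal
        unfold popbpFac
        have hA1 := binomA_le_one hp0 hp1 (b:ℕ) Y
        have hA0 : 0 ≤ ichoose ((b:ℕ):ℤ) (Y:ℤ) * p ^ Y * (1 - p) ^ ((b:ℕ) - Y) := by
          have h1 := ichoose_nonneg ((b:ℕ) : ℤ) (Y : ℤ)
          have h3 : (0:ℝ) ≤ 1 - p := by linarith
          positivity
        calc ichoose ((b:ℕ):ℤ) (Y:ℤ) * p ^ Y * (1 - p) ^ ((b:ℕ) - Y) *
              ichoose (((b:ℕ):ℤ) - 1) (((a:ℕ):ℤ) - 1) * υ ^ a * (1 - υ) ^ ((b:ℕ) - a)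
            = (ichoose ((b:ℕ):ℤ) (Y:ℤ) * p ^ Y * (1 - p) ^ ((b:ℕ) - Y)) *
              (ichoose (((b:ℕ):ℤ) - 1) (((a:ℕ):ℤ) - 1) * υ ^ a * (1 - υ) ^ ((b:ℕ) - a)) := by
              ring
          _ ≤ 1 * (ichoose (((b:ℕ):ℤ) - 1) (((a:ℕ):ℤ) - 1) * υ ^ a * (1 - υ) ^ ((b:ℕ) - a)) :=
              mul_le_mul_of_nonneg_right hA1 (hB b)
          _ = _ := one_mul _
    _ = ENNReal.ofReal (∑' b : ℕ+, ichoose (((b:ℕ):ℤ) - 1) (((a:ℕ):ℤ) - 1) * υ ^ a *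
          (1 - υ) ^ ((b:ℕ) - a)) := (ENNReal.ofReal_tsum_of_nonneg hB hsum.summable).symm
    _ = 1 := by rw [hsum.tsum_eq]; simp

lemma chain_le : ∀ (n : ℕ) (F : ℕ → ℕ → ℕ → ℝ≥0∞),
    (∀ i a, 1 ≤ a → ∑' b : ℕ+, F i a (b : ℕ) ≤ 1) → ∀ x0 : ℕ, 1 ≤ x0 →
    ∑' x : Fin n → ℕ+, ∏ i ∈ Finset.range n,
      F i (prevx x0 (xbar n x) i) (xbar n x i) ≤ 1 := by
  intro n
  induction n with
  | zero =>
    intro F hF x0 hx0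
    simp only [Finset.range_zero, Finset.prod_empty]
    rw [tsum_eq_single (fun i => i.elim0)
      (by intro b hb; exact absurd (funext fun i => i.elim0) hb)]
  | succ n ih =>
    intro F hF x0 hx0
    have key : ∀ x : Fin (n+1) → ℕ+,
        ∏ i ∈ Finset.range (n+1), F i (prevx x0 (xbar (n+1) x) i) (xbar (n+1) x i)
        = F 0 x0 (x 0) * ∏ i ∈ Finset.range n,
            F (i+1) (prevx (x 0) (xbar n (fun j => x j.succ)) i) (xbar n (fun j => x j.succ) i) := by
      intro x
      rw [Finset.prod_range_succ', mul_comm]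
      have h0 : F 0 (prevx x0 (xbar (n+1) x) 0) (xbar (n+1) x 0) = F 0 x0 (x 0) := by
        simp [prevx, xbar, extFin]
      rw [h0]
      congr 1
      apply Finset.prod_congr rfl
      intro i hi
      have hin : i < n := Finset.mem_range.1 hi
      congr 1
      · simp only [prevx, xbar, extFin, Nat.succ_ne_zero, if_false, Nat.add_sub_cancel]
        rcases Nat.eq_zero_or_pos i with h0 | hpos
        · subst h0; simp
        · rw [if_neg (by omega)]
          rw [dif_pos (by omega : i < n + 1), dif_pos (by omega : i - 1 < n)]
          congr 2
          apply Fin.ext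
          simp
          omega
      · simp only [xbar, extFin]
        rw [dif_pos (by omega : i + 1 < n + 1), dif_pos hin]
        congr 1
    calc ∑' x : Fin (n+1) → ℕ+, ∏ i ∈ Finset.range (n+1),
            F i (prevx x0 (xbar (n+1) x) i) (xbar (n+1) x i)
        = ∑' p : ℕ+ × (Fin n → ℕ+), F 0 x0 (p.1) * ∏ i ∈ Finset.range n,
            F (i+1) (prevx (p.1) (xbar n p.2) i) (xbar n p.2 i) := by
          rw [← (Fin.consEquiv (fun _ : Fin (n+1) => ℕ+)).tsum_eq]
          apply tsum_congr
          rintro ⟨b, t⟩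
          rw [show ((Fin.consEquiv (fun _ : Fin (n+1) => ℕ+)) (b, t)) = Fin.cons b t from rfl]
          rw [key]
          simp only [Fin.cons_zero, Fin.cons_succ]
      _ = ∑' b : ℕ+, ∑' t : Fin n → ℕ+, F 0 x0 b * ∏ i ∈ Finset.range n,
            F (i+1) (prevx b (xbar n t) i) (xbar n t i) :=
          ENNReal.tsum_prod (f := fun (b : ℕ+) (t : Fin n → ℕ+) => F 0 x0 b *
            ∏ i ∈ Finset.range n, F (i+1) (prevx b (xbar n t) i) (xbar n t i))
      _ = ∑' b : ℕ+, F 0 x0 b * ∑' t : Fin n → ℕ+, ∏ i ∈ Finset.range n,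
            F (i+1) (prevx b (xbar n t) i) (xbar n t i) := by
          apply tsum_congr; intro b; rw [ENNReal.tsum_mul_left]
      _ ≤ ∑' b : ℕ+, F 0 x0 b * 1 := by
          apply ENNReal.tsum_le_tsum
          intro b
          exact mul_le_mul_right (ih (fun j => F (j+1)) (fun i a ha => hF (i+1) a ha) b b.2) _
      _ = ∑' b : ℕ+, F 0 x0 b := by simp
      _ ≤ 1 := hF 0 x0 hx0

theorem popbp_likelihood_summable_le_one
    (n : ℕ) (hn : 1 ≤ n) (p : ℝ) (hp : p ∈ Set.Icc (0 : ℝ) 1)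
    (υ : ℕ → ℝ) (hυ : ∀ i < n, υ i ∈ Set.Ioo (0 : ℝ) 1)
    (x0 : ℕ) (hx0 : 1 ≤ x0) (y : Fin n → ℕ) :
    (∀ x : Fin n → ℕ+, 0 ≤ popbpTerm n p υ x0 (extFin n y 0) (xbar n x)) ∧
    Summable (fun x : Fin n → ℕ+ => popbpTerm n p υ x0 (extFin n y 0) (xbar n x)) ∧
    0 ≤ popbpL n p υ x0 y ∧ popbpL n p υ x0 y ≤ 1 := by
  obtain ⟨hp0, hp1⟩ := hp
  set Y : ℕ → ℕ := extFin n y 0 with hY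
  -- rewriting popbpTerm as a product of popbpFac
  have hterm : ∀ x : Fin n → ℕ+, popbpTerm n p υ x0 Y (xbar n x) =
      ∏ i ∈ Finset.range n, popbpFac p (υ i) (Y i) (prevx x0 (xbar n x) i) (xbar n x i) := by
    intro x
    apply Finset.prod_congr rfl
    intro i _
    rfl
  have hnn : ∀ x : Fin n → ℕ+, 0 ≤ popbpTerm n p υ x0 Y (xbar n x) := by
    intro x
    rw [hterm x]
    apply Finset.prod_nonneg
    intro i hi
    have hi' := hυ i (Finset.mem_range.1 hi)
    exact popbpFac_nonneg hp0 hp1 hi'.1 hi'.2 _ _ _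
  -- ENNReal valued factors
  set F : ℕ → ℕ → ℕ → ℝ≥0∞ := fun i a b =>
    if i < n then ENNReal.ofReal (popbpFac p (υ i) (Y i) a b) else 0 with hF
  have hFle : ∀ i a, 1 ≤ a → ∑' b : ℕ+, F i a (b : ℕ) ≤ 1 := by
    intro i a ha
    by_cases hin : i < n
    · simp only [hF, if_pos hin]
      exact factor_tsum_le ⟨hp0, hp1⟩ (hυ i hin) (Y i) a ha
    · simp [hF, if_neg hin]
  have hofReal : ∀ x : Fin n → ℕ+, ENNReal.ofReal (popbpTerm n p υ x0 Y (xbar n x)) =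
      ∏ i ∈ Finset.range n, F i (prevx x0 (xbar n x) i) (xbar n x i) := by
    intro x
    rw [hterm x]
    rw [ENNReal.ofReal_prod_of_nonneg]
    · apply Finset.prod_congr rfl
      intro i hi
      rw [hF]
      simp only [if_pos (Finset.mem_range.1 hi)]
    · intro i hi
      have hi' := hυ i (Finset.mem_range.1 hi)
      exact popbpFac_nonneg hp0 hp1 hi'.1 hi'.2 _ _ _
  have hbound : ∑' x : Fin n → ℕ+, ENNReal.ofReal (popbpTerm n p υ x0 Y (xbar n x)) ≤ 1 := by
    calc ∑' x : Fin n → ℕ+, ENNReal.ofReal (popbpTerm n p υ x0 Y (xbar n x))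
        = ∑' x : Fin n → ℕ+, ∏ i ∈ Finset.range n, F i (prevx x0 (xbar n x) i) (xbar n x i) :=
          tsum_congr hofReal
      _ ≤ 1 := chain_le n F hFle x0 hx0
  have hne : ∑' x : Fin n → ℕ+, ENNReal.ofReal (popbpTerm n p υ x0 Y (xbar n x)) ≠ ⊤ :=
    ne_top_of_le_ne_top ENNReal.one_ne_top hbound
  have hsummable : Summable (fun x : Fin n → ℕ+ => popbpTerm n p υ x0 Y (xbar n x)) := by
    have := ENNReal.summable_toReal hne
    refine this.congr fun x => ?_
    rw [ENNReal.toReal_ofReal (hnn x)]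
  refine ⟨hnn, hsummable, tsum_nonneg hnn, ?_⟩
  have : ENNReal.ofReal (popbpL n p υ x0 y) ≤ 1 := by
    rw [popbpL, ← hY, ENNReal.ofReal_tsum_of_nonneg hnn hsummable]
    exact hbound
  rw [← ENNReal.ofReal_one] at this
  exact (ENNReal.ofReal_le_ofReal_iff (by norm_num)).1 this
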